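/- arXiv:2509.12498 — 2 statements merged into one kernel-verified Lean document; each statement's English description precedes it below -/
import Mathlib

section
/- If $\{\mathcal{H}_i\}$ is a sequence of real finite-dimensional inner product spaces with isometries $I_{ij}: \mathcal{H}_i \to \mathcal{H}_j$ for $i \le j$ satisfying $I_{ii} = \mathrm{Id}$ and $I_{jk} I_{ij} = I_{ik}$, then the Banach space $\mathcal{H}_\infty = \{ \{h_i\} \in \ell^\infty(\{\mathcal{H}_i\}) : I_{ij}^* h_j = h_i \text{ for all } i < j \}$ with norm $\|\{h_i\}\|_\infty = \sup_i \|h_i\|_i$ satisfies the parallelogram identity, and hence is a Hilbert space. -/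
/-!
The bonding maps `I i j` are isometries, so their adjoints are contractions; hence for a
compatible sequence (`(I i j)† h j = h i`) the norms `‖h i‖` increase, and when bounded they
converge to their supremum. The supremum norm of `ℋ∞` is therefore a limit of Hilbert-space
norms, and the parallelogram identity, which holds at every index, passes to the limit.
-/

open Filter Topology
open scoped ENNReal

theorem ContinuousLinearMap.norm_adjoint_apply_le_of_norm_map
    {𝕜 E F : Type*} [RCLike 𝕜] [NormedAddCommGroup E] [InnerProductSpace 𝕜 E] [CompleteSpace E]
    [NormedAddCommGroup F] [InnerProductSpace 𝕜 F] [CompleteSpace F]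
    {T : E →L[𝕜] F} (hT : ∀ x, ‖T x‖ = ‖x‖) (y : F) : ‖adjoint T y‖ ≤ ‖y‖ := by
  have hT_le : ‖T‖ ≤ 1 := T.opNorm_le_bound zero_le_one fun x => by rw [hT, one_mul]
  calc ‖adjoint T y‖ ≤ ‖adjoint T‖ * ‖y‖ := (adjoint T).le_opNorm y
    _ = ‖T‖ * ‖y‖ := by rw [LinearIsometryEquiv.norm_map]
    _ ≤ ‖y‖ := mul_le_of_le_one_left (norm_nonneg y) hT_le

theorem parallelogram_law_of_tendsto_norm {ι : Type*} {l : Filter ι} [l.NeBot]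
    {E : ι → Type*} [∀ i, NormedAddCommGroup (E i)] [∀ i, InnerProductSpace ℝ (E i)]
    {f g : ∀ i, E i} {a b c d : ℝ}
    (hf : Tendsto (fun i => ‖f i‖) l (𝓝 a)) (hg : Tendsto (fun i => ‖g i‖) l (𝓝 b))
    (hadd : Tendsto (fun i => ‖f i + g i‖) l (𝓝 c))
    (hsub : Tendsto (fun i => ‖f i - g i‖) l (𝓝 d)) :
    c ^ 2 + d ^ 2 = 2 * a ^ 2 + 2 * b ^ 2 := by
  have hlhs := (hadd.pow 2).add (hsub.pow 2)
  have hrhs := ((hf.pow 2).const_mul 2).add ((hg.pow 2).const_mul 2)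
  refine tendsto_nhds_unique hlhs (hrhs.congr fun i => ?_)
  linarith [parallelogram_law_with_norm ℝ (f i) (g i)]

section ProjectiveLimit

variable {ι : Type*} [Preorder ι] {H : ι → Type*} [∀ i, NormedAddCommGroup (H i)]
  [∀ i, InnerProductSpace ℝ (H i)] [∀ i, CompleteSpace (H i)]

/-- The bounded compatible sequences are the elements of `ℋ∞`. -/
def IsCompatible (I : ∀ i j, i ≤ j → H i →L[ℝ] H j) (f : ∀ i, H i) : Prop :=
  ∀ i j (hij : i ≤ j), ContinuousLinearMap.adjoint (I i j hij) (f j) = f i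

variable {I : ∀ i j, i ≤ j → H i →L[ℝ] H j} {f g : ∀ i, H i}

theorem IsCompatible.add (hf : IsCompatible I f) (hg : IsCompatible I g) :
    IsCompatible I (f + g) := fun i j hij => by
  simp only [Pi.add_apply, map_add, hf i j hij, hg i j hij]

theorem IsCompatible.sub (hf : IsCompatible I f) (hg : IsCompatible I g) :
    IsCompatible I (f - g) := fun i j hij => by
  simp only [Pi.sub_apply, map_sub, hf i j hij, hg i j hij]

theorem IsCompatible.monotone_norm (hiso : ∀ i j (h : i ≤ j) (x : H i), ‖I i j h x‖ = ‖x‖)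
    (hf : IsCompatible I f) : Monotone fun i => ‖f i‖ := fun i j hij => by
  simpa only [hf i j hij] using
    ContinuousLinearMap.norm_adjoint_apply_le_of_norm_map (hiso i j hij) (f j)

theorem IsCompatible.tendsto_norm_ciSup (hiso : ∀ i j (h : i ≤ j) (x : H i), ‖I i j h x‖ = ‖x‖)
    (hf : IsCompatible I f) (hfb : Memℓp f ∞) :
    Tendsto (fun i => ‖f i‖) atTop (𝓝 (⨆ i, ‖f i‖)) :=
  tendsto_atTop_ciSup (hf.monotone_norm hiso) (memℓp_infty_iff.mp hfb)

end ProjectiveLimit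

theorem stmt_0_general
    (H : ℕ → Type*) [∀ i, NormedAddCommGroup (H i)] [∀ i, InnerProductSpace ℝ (H i)]
    [∀ i, FiniteDimensional ℝ (H i)]
    (I : ∀ i j, i ≤ j → H i →L[ℝ] H j)
    (hiso : ∀ i j (h : i ≤ j) (x : H i), ‖I i j h x‖ = ‖x‖)
    (h g : ∀ i, H i)
    (hhb : BddAbove (Set.range fun i => ‖h i‖))
    (hgb : BddAbove (Set.range fun i => ‖g i‖))
    (hhc : ∀ i j (hij : i ≤ j), ContinuousLinearMap.adjoint (I i j hij) (h j) = h i)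
    (hgc : ∀ i j (hij : i ≤ j), ContinuousLinearMap.adjoint (I i j hij) (g j) = g i) :
    (⨆ i, ‖h i + g i‖) ^ 2 + (⨆ i, ‖h i - g i‖) ^ 2
      = 2 * (⨆ i, ‖h i‖) ^ 2 + 2 * (⨆ i, ‖g i‖) ^ 2 := by
  have hh : IsCompatible I h := hhc
  have hg : IsCompatible I g := hgc
  have hhℓ : Memℓp h ∞ := memℓp_infty_iff.mpr hhb
  have hgℓ : Memℓp g ∞ := memℓp_infty_iff.mpr hgb
  exact parallelogram_law_of_tendsto_norm (hh.tendsto_norm_ciSup hiso hhℓ)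
    (hg.tendsto_norm_ciSup hiso hgℓ) ((hh.add hg).tendsto_norm_ciSup hiso (hhℓ.add hgℓ))
    ((hh.sub hg).tendsto_norm_ciSup hiso (hhℓ.sub hgℓ))

/-- The projective limit Banach space `ℋ∞` of a projective system dual to an inductive
system of finite-dimensional real inner product spaces with isometric bonding maps
satisfies the parallelogram identity (hence is a Hilbert space). -/
theorem stmt_0
    (H : ℕ → Type*) [∀ i, NormedAddCommGroup (H i)] [∀ i, InnerProductSpace ℝ (H i)]
    [∀ i, FiniteDimensional ℝ (H i)]
    (I : ∀ i j, i ≤ j → H i →L[ℝ] H j)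
    (hiso : ∀ i j (h : i ≤ j) (x : H i), ‖I i j h x‖ = ‖x‖)
    (hid : ∀ i (x : H i), I i i le_rfl x = x)
    (hcomp : ∀ i j k (hij : i ≤ j) (hjk : j ≤ k) (x : H i),
      I j k hjk (I i j hij x) = I i k (hij.trans hjk) x)
    (h g : ∀ i, H i)
    (hhb : BddAbove (Set.range fun i => ‖h i‖))
    (hgb : BddAbove (Set.range fun i => ‖g i‖))
    (hhc : ∀ i j (hij : i ≤ j), ContinuousLinearMap.adjoint (I i j hij) (h j) = h i)
    (hgc : ∀ i j (hij : i ≤ j), ContinuousLinearMap.adjoint (I i j hij) (g j) = g i) :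
    (⨆ i, ‖h i + g i‖) ^ 2 + (⨆ i, ‖h i - g i‖) ^ 2
      = 2 * (⨆ i, ‖h i‖) ^ 2 + 2 * (⨆ i, ‖g i‖) ^ 2 :=
  stmt_0_general H I hiso h g hhb hgb hhc hgc
end

section
/- Let $(\mathcal{H}_i, I_{ij})$ be an inductive system of real finite-dimensional Hilbert spaces with isometric bonding maps, with inductive/projective limit Hilbert space $\mathcal{H}_\infty$, isometries $I_i: \mathcal{H}_i \to \mathcal{H}_\infty$ and contractions $P_i = I_i^*: \mathcal{H}_\infty \to \mathcal{H}_i$ satisfying $P_i I_i = \mathrm{Id}$ and $\bigcup_i \mathrm{Im}\, I_i$ dense in $\mathcal{H}_\infty$. Let $f_i: \mathcal{H}_i \to \mathbb{C}$ be continuous functions with $f_i = f_j \circ I_{ij}$ for all $j > i$, such that the functions $f_i \circ P_i: \mathcal{H}_\infty \to \mathbb{C}$ are equicontinuous and pointwise uniformly bounded. Then there exists a unique continuous $f_\infty: \mathcal{H}_\infty \to \mathbb{C}$ with $f_i = f_\infty \circ I_i$ for all $i$. -/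
open Filter Topology

/-!
On the dense set `⋃ᵢ Im Iᵢ` the sequence `gₙ = fₙ ∘ Pₙ` is eventually constant: for `j ≥ i`,
`gⱼ (Iᵢ x) = fⱼ (Pⱼ Iⱼ I_{ij} x) = fⱼ (I_{ij} x) = fᵢ x`. An equicontinuous family that converges
pointwise on a dense set is pointwise Cauchy everywhere, so `gₙ` converges pointwise to a function
`f∞`, continuous by equicontinuity, with `f∞ ∘ Iᵢ = fᵢ`. Uniqueness: continuous functions agreeing
on a dense set are equal.
-/

section

variable {ι X α : Type*} [TopologicalSpace X] [UniformSpace α]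

theorem Equicontinuous.cauchy_map_of_dense {F : ι → X → α} (hF : Equicontinuous F)
    {l : Filter ι} [l.NeBot] {S : Set X} (hS : Dense S) (hC : ∀ y ∈ S, Cauchy (l.map (F · y)))
    (x : X) : Cauchy (l.map (F · x)) := by
  refine cauchy_map_iff'.mpr fun U hU => mem_map.mpr ?_
  obtain ⟨V, hV, hVsymm, hVU⟩ := comp_comp_symm_mem_uniformity_sets hU
  obtain ⟨y, hyS, hxy⟩ := hS.inter_nhds_nonempty (hF x V hV)
  filter_upwards [mem_map.mp (cauchy_map_iff'.mp (hC y hyS) hV)] with p hp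
  exact hVU ⟨F p.2 y, ⟨F p.1 y, hxy p.1, hp⟩, SetRel.symm V (hxy p.2)⟩

theorem Equicontinuous.exists_continuous_tendsto_of_dense [CompleteSpace α] {F : ι → X → α}
    (hF : Equicontinuous F) {l : Filter ι} [l.NeBot] {S : Set X} (hS : Dense S)
    (hconv : ∀ y ∈ S, ∃ z, Tendsto (F · y) l (𝓝 z)) :
    ∃ f : X → α, Continuous f ∧ Tendsto F l (𝓝 f) := by
  have hC x : ∃ z, Tendsto (F · x) l (𝓝 z) :=
    cauchy_map_iff_exists_tendsto.mp <| hF.cauchy_map_of_dense hS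
      (fun y hy => let ⟨_, hz⟩ := hconv y hy; hz.cauchy_map) x
  choose f hf using hC
  have hlim : Tendsto F l (𝓝 f) := tendsto_pi_nhds.mpr hf
  exact ⟨f, hlim.continuous_of_equicontinuous hF, hlim⟩

end

theorem stmt_8_general
    (H : ℕ → Type*) [∀ i, NormedAddCommGroup (H i)] [∀ i, InnerProductSpace ℝ (H i)]
    [∀ i, FiniteDimensional ℝ (H i)]
    (Hinf : Type*) [NormedAddCommGroup Hinf] [InnerProductSpace ℝ Hinf] [CompleteSpace Hinf]
    (Iij : ∀ i j, i ≤ j → H i →L[ℝ] H j)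
    (Ii : ∀ i, H i →L[ℝ] Hinf)
    (hcompat : ∀ i j (h : i ≤ j) (x : H i), Ii j (Iij i j h x) = Ii i x)
    (hPI : ∀ i (x : H i), ContinuousLinearMap.adjoint (Ii i) (Ii i x) = x)
    (hdense : Dense (⋃ i, Set.range (Ii i)))
    (f : ∀ i, H i → ℂ)
    (hcons : ∀ i j (h : i ≤ j) (x : H i), f i x = f j (Iij i j h x))
    (hequi : Equicontinuous fun i (x : Hinf) => f i (ContinuousLinearMap.adjoint (Ii i) x)) :
    ∃! finf : Hinf → ℂ, Continuous finf ∧ ∀ i (x : H i), finf (Ii i x) = f i x := by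
  have hstable i (x : H i) j (hij : i ≤ j) :
      f j (ContinuousLinearMap.adjoint (Ii j) (Ii i x)) = f i x := by
    rw [← hcompat i j hij x, hPI, hcons i j hij]
  have htends i (x : H i) :
      Tendsto (fun n => f n (ContinuousLinearMap.adjoint (Ii n) (Ii i x))) atTop (𝓝 (f i x)) :=
    tendsto_const_nhds.congr' <| (eventually_ge_atTop i).mono fun j hij => (hstable i x j hij).symm
  obtain ⟨finf, hcont, hlim⟩ := hequi.exists_continuous_tendsto_of_dense hdense <| by
    rintro _ ⟨_, ⟨i, rfl⟩, x, rfl⟩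
    exact ⟨f i x, htends i x⟩
  have hval i (x : H i) : finf (Ii i x) = f i x :=
    tendsto_nhds_unique (tendsto_pi_nhds.mp hlim _) (htends i x)
  refine ⟨finf, ⟨hcont, hval⟩, fun G ⟨hGc, hG⟩ => hGc.ext_on hdense hcont ?_⟩
  rintro _ ⟨_, ⟨i, rfl⟩, x, rfl⟩
  rw [hG, hval]

/-- Lemma 2.1 of the paper: given an inductive system of finite-dimensional real Hilbert
spaces with isometric bonding maps, limit space `ℋ∞`, isometries `Iᵢ : ℋᵢ → ℋ∞` and
contractions `Pᵢ = Iᵢ^*` with `Pᵢ Iᵢ = Id` and `⋃ᵢ Im Iᵢ` dense, and continuous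
`fᵢ : ℋᵢ → ℂ` with `fᵢ = fⱼ ∘ I_{ij}` such that the `fᵢ ∘ Pᵢ` are equicontinuous and
pointwise uniformly bounded, there is a unique continuous `f∞ : ℋ∞ → ℂ` with
`fᵢ = f∞ ∘ Iᵢ` for all `i`. -/
theorem stmt_8
    (H : ℕ → Type*) [∀ i, NormedAddCommGroup (H i)] [∀ i, InnerProductSpace ℝ (H i)]
    [∀ i, FiniteDimensional ℝ (H i)]
    (Hinf : Type*) [NormedAddCommGroup Hinf] [InnerProductSpace ℝ Hinf] [CompleteSpace Hinf]
    (Iij : ∀ i j, i ≤ j → H i →L[ℝ] H j)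
    (hIij : ∀ i j (h : i ≤ j) (x : H i), ‖Iij i j h x‖ = ‖x‖)
    (Ii : ∀ i, H i →L[ℝ] Hinf)
    (hIi : ∀ i (x : H i), ‖Ii i x‖ = ‖x‖)
    (hcompat : ∀ i j (h : i ≤ j) (x : H i), Ii j (Iij i j h x) = Ii i x)
    (hPI : ∀ i (x : H i), ContinuousLinearMap.adjoint (Ii i) (Ii i x) = x)
    (hdense : Dense (⋃ i, Set.range (Ii i)))
    (f : ∀ i, H i → ℂ) (hfc : ∀ i, Continuous (f i))
    (hcons : ∀ i j (h : i ≤ j) (x : H i), f i x = f j (Iij i j h x))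
    (hequi : Equicontinuous fun i (x : Hinf) => f i (ContinuousLinearMap.adjoint (Ii i) x))
    (hbd : ∀ x : Hinf,
      BddAbove (Set.range fun i => ‖f i (ContinuousLinearMap.adjoint (Ii i) x)‖)) :
    ∃! finf : Hinf → ℂ, Continuous finf ∧ ∀ i (x : H i), finf (Ii i x) = f i x :=
  stmt_8_general H Hinf Iij Ii hcompat hPI hdense f hcons hequi
end
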